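/- arXiv:2010.08572 — 5 statements merged into one kernel-verified Lean document; each statement's English description precedes it below -/
import Mathlib

section
/- Suppose A_c := A − BK is Schur-stable. Then for every z ∈ ℂ with |z| = 1, the doubly infinite series ∑_{d ∈ ℤ} z^{-d} T_d (with real matrices viewed as complex matrices) converges and its sum equals the matrix symbol sym(z) = (z(zI − A_c)^{-1}B)^* Q_c (z(zI − A_c)^{-1}B) + R. -/
open Matrix Filter
open scoped Kronecker

/-- `A` is Schur-stable: every complex eigenvalue has modulus `< 1`. -/
def SchurStable {n : ℕ} (A : Matrix (Fin n) (Fin n) ℝ) : Prop :=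
  ∀ μ ∈ spectrum ℂ (A.map Complex.ofReal), ‖μ‖ < 1

/-- The `d`-th block of the infinite block-Toeplitz matrix associated with the
condensed Hessian. -/
noncomputable def Tblk {n m : ℕ} (Ac : Matrix (Fin n) (Fin n) ℝ)
    (B : Matrix (Fin n) (Fin m) ℝ) (Qc : Matrix (Fin n) (Fin n) ℝ)
    (R : Matrix (Fin m) (Fin m) ℝ) (d : ℤ) : Matrix (Fin m) (Fin m) ℝ :=
  if 0 ≤ d then
    (∑' i : ℕ, Bᵀ * (Acᵀ) ^ i * Qc * Ac ^ (i + d.toNat) * B) + (if d = 0 then R else 0)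
  else
    ((∑' i : ℕ, Bᵀ * (Acᵀ) ^ i * Qc * Ac ^ (i + (-d).toNat) * B))ᵀ

/-- The `(j,k)` block (for `j ≥ k`) of the condensed Hessian with horizon `N`. -/
noncomputable def Hge {n m : ℕ} (Ac : Matrix (Fin n) (Fin n) ℝ)
    (B : Matrix (Fin n) (Fin m) ℝ) (Qc P : Matrix (Fin n) (Fin n) ℝ)
    (R : Matrix (Fin m) (Fin m) ℝ) (N j k : ℕ) : Matrix (Fin m) (Fin m) ℝ :=
  (∑ i ∈ Finset.range (N - j), Bᵀ * (Acᵀ) ^ i * Qc * Ac ^ (i + j - k) * B)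
    + Bᵀ * (Acᵀ) ^ (N - j) * P * Ac ^ (N - k) * B + (if j = k then R else 0)

/-- The condensed Hessian with horizon `N`, as an `Nm × Nm` real matrix. -/
noncomputable def Hmat {n m : ℕ} (Ac : Matrix (Fin n) (Fin n) ℝ)
    (B : Matrix (Fin n) (Fin m) ℝ) (Qc P : Matrix (Fin n) (Fin n) ℝ)
    (R : Matrix (Fin m) (Fin m) ℝ) (N : ℕ) :
    Matrix (Fin N × Fin m) (Fin N × Fin m) ℝ :=
  Matrix.of fun p q =>
    if (q.1 : ℕ) ≤ (p.1 : ℕ) then Hge Ac B Qc P R N p.1 q.1 p.2 q.2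
    else (Hge Ac B Qc P R N q.1 p.1)ᵀ p.2 q.2

/-- The matrix symbol of the condensed Hessian. -/
noncomputable def symb {n m : ℕ} (Ac : Matrix (Fin n) (Fin n) ℝ)
    (B : Matrix (Fin n) (Fin m) ℝ) (Qc : Matrix (Fin n) (Fin n) ℝ)
    (R : Matrix (Fin m) (Fin m) ℝ) (z : ℂ) : Matrix (Fin m) (Fin m) ℂ :=
  (z • ((z • (1 : Matrix (Fin n) (Fin n) ℂ) - Ac.map Complex.ofReal)⁻¹
      * B.map Complex.ofReal))ᴴ
    * Qc.map Complex.ofReal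
    * (z • ((z • (1 : Matrix (Fin n) (Fin n) ℂ) - Ac.map Complex.ofReal)⁻¹
      * B.map Complex.ofReal))
  + R.map Complex.ofReal

/-!
Schur stability bounds the spectral radius of `A_c` below `1`, so by Gelfand's formula the
Neumann series `z (zI - A_c)⁻¹ = ∑ₖ z⁻ᵏ A_cᵏ` converges absolutely on the unit circle.
Substituting it on both sides of `Q_c` and using `z̄ = z⁻¹` expands `sym(z) - R` into the
absolutely convergent double series `∑_{p,q} zᵖ z⁻ᑫ Bᵀ (A_cᵀ)ᵖ Q_c A_c^q B`. Summed along the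
diagonals `q - p = d` it becomes `∑_d z⁻ᵈ T_d` (for `d < 0` through the symmetry of `Q_c`),
and `R` is the extra summand of `T_0`.
-/

open scoped Matrix.Norms.Frobenius

theorem summable_norm_pow_of_spectralRadius_lt_one {A : Type*} [NormedRing A]
    [NormedAlgebra ℂ A] [CompleteSpace A] {a : A} (ha : spectralRadius ℂ a < 1) :
    Summable fun k : ℕ => ‖a ^ k‖ := by
  obtain ⟨r, har, hr1⟩ := ENNReal.lt_iff_exists_nnreal_btwn.mp ha
  refine Summable.of_norm_bounded_eventually_nat
    (summable_geometric_of_lt_one r.2 (by exact_mod_cast hr1)) ?_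
  filter_upwards [(spectrum.pow_norm_pow_one_div_tendsto_nhds_spectralRadius a).eventually_lt_const
    har, eventually_gt_atTop 0] with k hk hk0
  rw [ENNReal.ofReal_lt_coe_iff (by positivity), one_div] at hk
  have hpow := (Real.rpow_inv_lt_iff_of_pos (norm_nonneg _) r.2 (Nat.cast_pos.2 hk0)).1 hk
  rw [norm_norm]
  exact_mod_cast hpow.le

theorem SchurStable.spectralRadius_lt_one {n : ℕ} {A : Matrix (Fin n) (Fin n) ℝ}
    (hA : SchurStable A) : spectralRadius ℂ (A.map Complex.ofReal) < 1 := by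
  rcases (spectrum ℂ (A.map Complex.ofReal)).eq_empty_or_nonempty with h | h
  · simp [spectralRadius, h]
  · obtain ⟨μ, hμ, hρ⟩ := spectrum.exists_nnnorm_eq_spectralRadius_of_nonempty h
    rw [← hρ]
    exact_mod_cast hA μ hμ

theorem Matrix.hasSum_inv_smul_pow {n 𝕜 : Type*} [Fintype n] [DecidableEq n] [Field 𝕜]
    [TopologicalSpace 𝕜] [IsTopologicalRing 𝕜] [T2Space 𝕜] {A : Matrix n n 𝕜} {z : 𝕜}
    (hz : z ≠ 0) (h : Summable fun k : ℕ => (z⁻¹ • A) ^ k) :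
    HasSum (fun k : ℕ => (z⁻¹ • A) ^ k) (z • (z • 1 - A)⁻¹) := by
  have hinv : (z • 1 - A)⁻¹ = z⁻¹ • ∑' k : ℕ, (z⁻¹ • A) ^ k := by
    refine inv_eq_right_inv ?_
    rw [Matrix.mul_smul, ← smul_mul_assoc, smul_sub, smul_smul, inv_mul_cancel₀ hz, one_smul]
    exact h.one_sub_mul_tsum_pow
  rw [hinv, smul_smul, mul_inv_cancel₀ hz, one_smul]
  exact h.hasSum

theorem HasSum.matrix_mul_mul {ι R l m n p : Type*} [Fintype m] [Fintype n] [Semiring R]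
    [TopologicalSpace R] [IsTopologicalSemiring R] {f : ι → Matrix m n R} {s : Matrix m n R}
    (hf : HasSum f s) (X : Matrix l m R) (Y : Matrix n p R) :
    HasSum (fun i => X * f i * Y) (X * s * Y) := by
  let φ : Matrix m n R →+ Matrix l p R :=
    { toFun M := X * M * Y
      map_zero' := by simp
      map_add' _ _ := by rw [Matrix.mul_add, Matrix.add_mul] }
  exact hf.map φ ((continuous_const.matrix_mul continuous_id).matrix_mul continuous_const)

/-- `(d, i)` is the `i`-th point of the diagonal `{(p, q) | q - p = d}` of `ℕ × ℕ`. -/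
def diagonalsEquiv : ℤ × ℕ ≃ ℕ × ℕ where
  toFun p := if 0 ≤ p.1 then (p.2, p.2 + p.1.toNat) else (p.2 + (-p.1).toNat, p.2)
  invFun q := ((q.2 : ℤ) - q.1, min q.1 q.2)
  left_inv := by
    rintro ⟨d, i⟩
    by_cases h : 0 ≤ d <;> simp only [h, if_true, if_false] <;> ext <;> simp <;> omega
  right_inv := by
    rintro ⟨p, q⟩
    by_cases h : (0 : ℤ) ≤ q - p <;> simp only [h, if_true, if_false] <;> ext <;> simp <;> omega

theorem HasSum.sum_diagonals {α : Type*} [AddCommGroup α] [UniformSpace α] [IsUniformAddGroup α]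
    [CompleteSpace α] [T3Space α] {f : ℕ × ℕ → α} {s : α} (h : HasSum f s) :
    HasSum (fun d : ℤ => ∑' i, f (diagonalsEquiv (d, i))) s :=
  (diagonalsEquiv.hasSum_iff.2 h).prod_fiberwise fun d =>
    ((diagonalsEquiv.summable_iff.2 h.summable).prod_factor d).hasSum

section ofReal

variable {ι l m n : Type*}

theorem Matrix.map_ofReal_tsum {f : ι → Matrix m n ℝ} :
    (∑' i, f i).map Complex.ofReal = ∑' i, (f i).map Complex.ofReal :=
  Function.LeftInverse.map_tsum f (g := Complex.ofRealHom.toAddMonoidHom.mapMatrix)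
    (continuous_id.matrix_map Complex.continuous_ofReal)
    (continuous_id.matrix_map Complex.continuous_re) fun M => by ext; simp

theorem Matrix.map_ofReal_mul [Fintype m] (X : Matrix l m ℝ) (Y : Matrix m n ℝ) :
    (X * Y).map Complex.ofReal = X.map Complex.ofReal * Y.map Complex.ofReal :=
  Matrix.map_mul (f := Complex.ofRealHom)

theorem Matrix.map_ofReal_pow [Fintype n] [DecidableEq n] (X : Matrix n n ℝ) (k : ℕ) :
    (X ^ k).map Complex.ofReal = X.map Complex.ofReal ^ k :=
  X.map_pow Complex.ofRealHom k

theorem Matrix.conjTranspose_map_ofReal (X : Matrix m n ℝ) :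
    (X.map Complex.ofReal)ᴴ = Xᵀ.map Complex.ofReal := by
  ext; simp

end ofReal

section Symbol

variable {n m : ℕ} (Ac : Matrix (Fin n) (Fin n) ℝ) (B : Matrix (Fin n) (Fin m) ℝ)
  (Qc : Matrix (Fin n) (Fin n) ℝ)

/-- The `(p, q)` term of `(z (zI - A_c)⁻¹ B)ᴴ Q_c (z (zI - A_c)⁻¹ B)` expanded with the Neumann
series `z (zI - A_c)⁻¹ = ∑ₖ z⁻ᵏ A_cᵏ` on both sides. -/
noncomputable def symbTerm (z : ℂ) (pq : ℕ × ℕ) : Matrix (Fin m) (Fin m) ℂ :=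
  (z ^ pq.1 * z⁻¹ ^ pq.2) • (Bᵀ * Acᵀ ^ pq.1 * Qc * Ac ^ pq.2 * B).map Complex.ofReal

theorem symbTerm_eq {z : ℂ} (hz : ‖z‖ = 1) (p q : ℕ) :
    symbTerm Ac B Qc z (p, q) = (B.map Complex.ofReal)ᴴ * ((((z⁻¹ • Ac.map Complex.ofReal) ^ p)ᴴ
      * Qc.map Complex.ofReal * (z⁻¹ • Ac.map Complex.ofReal) ^ q)) * B.map Complex.ofReal := by
  simp only [symbTerm, smul_pow, conjTranspose_smul, star_pow, star_inv₀, Complex.star_def,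
    ← Complex.inv_eq_conj hz, inv_inv, conjTranspose_pow, conjTranspose_map_ofReal,
    map_ofReal_mul, map_ofReal_pow, Matrix.smul_mul, Matrix.mul_smul, smul_smul,
    Matrix.mul_assoc]
  rw [mul_comm]

variable {Ac} in
theorem SchurStable.hasSum_symbTerm (hAc : SchurStable Ac) {z : ℂ} (hz : ‖z‖ = 1) :
    HasSum (symbTerm Ac B Qc z)
      ((z • ((z • (1 : Matrix (Fin n) (Fin n) ℂ) - Ac.map Complex.ofReal)⁻¹
        * B.map Complex.ofReal))ᴴ * Qc.map Complex.ofReal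
        * (z • ((z • (1 : Matrix (Fin n) (Fin n) ℂ) - Ac.map Complex.ofReal)⁻¹
        * B.map Complex.ofReal))) := by
  set A := Ac.map Complex.ofReal
  set Q := Qc.map Complex.ofReal
  have hnorm : ∀ k : ℕ, ‖(z⁻¹ • A) ^ k‖ = ‖A ^ k‖ := fun k => by
    rw [smul_pow, norm_smul, norm_pow, norm_inv, hz, inv_one, one_pow, one_mul]
  have hsummable : Summable fun k : ℕ => ‖(z⁻¹ • A) ^ k‖ := by
    simpa only [hnorm] using summable_norm_pow_of_spectralRadius_lt_one hAc.spectralRadius_lt_one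
  have hneumann := hasSum_inv_smul_pow (by rintro rfl; simp at hz) hsummable.of_norm
  have hleft : Summable fun k : ℕ => ‖((z⁻¹ • A) ^ k)ᴴ * Q‖ :=
    .of_nonneg_of_le (fun _ => norm_nonneg _)
      (fun k => (norm_mul_le _ _).trans_eq (by rw [frobenius_norm_conjTranspose]))
      (hsummable.mul_right ‖Q‖)
  have hfactor := hneumann.matrix_conjTranspose.mul_right Q
  have hprodSummable := summable_mul_of_summable_norm hleft hsummable
  have hprod := hfactor.mul hneumann hprodSummable
  convert hprod.matrix_mul_mul (B.map Complex.ofReal)ᴴ (B.map Complex.ofReal) using 1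
  · ext1 ⟨p, q⟩
    exact symbTerm_eq Ac B Qc hz p q
  · simp only [Matrix.smul_mul, conjTranspose_smul, conjTranspose_mul, Matrix.mul_smul,
      Matrix.mul_assoc]

variable {Qc} in
theorem zpow_neg_smul_map_Tblk (hQc : Qc.IsSymm) (R : Matrix (Fin m) (Fin m) ℝ) {z : ℂ}
    (hz : z ≠ 0) (d : ℤ) :
    z ^ (-d) • (Tblk Ac B Qc R d).map Complex.ofReal
      = (∑' i, symbTerm Ac B Qc z (diagonalsEquiv (d, i)))
        + if d = 0 then R.map Complex.ofReal else 0 := by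
  rcases le_or_gt 0 d with hd | hd
  · lift d to ℕ using hd with e
    have hcoef : ∀ i : ℕ, z ^ i * z⁻¹ ^ (i + e) = z ^ (-(e : ℤ)) := fun i => by
      rw [pow_add, _root_.zpow_neg, zpow_natCast, inv_pow, inv_pow, ← mul_assoc,
        mul_inv_cancel₀ (pow_ne_zero _ hz), one_mul]
    simp only [Tblk, diagonalsEquiv, Equiv.coe_fn_mk, symbTerm, Nat.cast_nonneg, if_true,
      Int.toNat_natCast, hcoef, tsum_const_smul'', Matrix.map_add _ Complex.ofReal_add,
      map_ofReal_tsum, smul_add]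
    split_ifs with he <;> simp [he]
  · obtain ⟨e, rfl⟩ := Int.exists_eq_neg_ofNat hd.le
    have hcoef : ∀ i : ℕ, z ^ (i + e) * z⁻¹ ^ i = z ^ (-(-(e : ℤ))) := fun i => by
      rw [neg_neg, zpow_natCast, pow_add, inv_pow, mul_right_comm,
        mul_inv_cancel₀ (pow_ne_zero _ hz), one_mul]
    have hterm : ∀ i : ℕ, symbTerm Ac B Qc z (i + e, i)
        = z ^ (-(-(e : ℤ))) • (Bᵀ * Acᵀ ^ i * Qc * Ac ^ (i + e) * B)ᵀ.map Complex.ofReal :=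
      fun i => by
        simp only [symbTerm, hcoef, transpose_mul, transpose_transpose, transpose_pow, hQc.eq,
          Matrix.mul_assoc]
    simp only [Tblk, diagonalsEquiv, Equiv.coe_fn_mk, not_le.2 hd, if_false, neg_neg,
      Int.toNat_natCast, hd.ne, add_zero, hterm, tsum_const_smul'', transpose_map,
      transpose_tsum, map_ofReal_tsum]

end Symbol

theorem stmt3_general {n m : ℕ}
    (A : Matrix (Fin n) (Fin n) ℝ) (B : Matrix (Fin n) (Fin m) ℝ)
    (K : Matrix (Fin m) (Fin n) ℝ)
    (Q : Matrix (Fin n) (Fin n) ℝ) (R : Matrix (Fin m) (Fin m) ℝ)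
    (hQ : Q.PosSemidef) (hR : R.PosDef)
    (hstab : SchurStable (A - B * K)) :
    ∀ z : ℂ, ‖z‖ = 1 →
      HasSum
        (fun d : ℤ =>
          z ^ (-d) • ((Tblk (A - B * K) B (Q + Kᵀ * R * K) R d).map Complex.ofReal))
        (symb (A - B * K) B (Q + Kᵀ * R * K) R z) := by
  intro z hz
  have hQc : (Q + Kᵀ * R * K).IsSymm := by
    have h := hQ.isHermitian.add (isHermitian_conjTranspose_mul_mul K hR.isHermitian)
    rwa [conjTranspose_eq_transpose_of_trivial, isHermitian_iff_isSymm] at h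
  have hz0 : z ≠ 0 := by rintro rfl; simp at hz
  simp_rw [zpow_neg_smul_map_Tblk _ _ hQc R hz0]
  exact (hstab.hasSum_symbTerm B _ hz).sum_diagonals.add (hasSum_ite_eq 0 _)

/-- If `A - B*K` is Schur-stable, the doubly infinite series `∑_{d∈ℤ} z^{-d} T_d`
converges for every `z` on the unit circle, with sum equal to the matrix symbol
`(z(zI-A_c)⁻¹B)^* Q_c (z(zI-A_c)⁻¹B) + R`. -/
theorem stmt3 {n m : ℕ} (hn : 0 < n) (hm : 0 < m)
    (A : Matrix (Fin n) (Fin n) ℝ) (B : Matrix (Fin n) (Fin m) ℝ)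
    (K : Matrix (Fin m) (Fin n) ℝ)
    (Q : Matrix (Fin n) (Fin n) ℝ) (R : Matrix (Fin m) (Fin m) ℝ)
    (hQ : Q.PosSemidef) (hR : R.PosDef)
    (hstab : SchurStable (A - B * K)) :
    ∀ z : ℂ, ‖z‖ = 1 →
      HasSum
        (fun d : ℤ =>
          z ^ (-d) • ((Tblk (A - B * K) B (Q + Kᵀ * R * K) R d).map Complex.ofReal))
        (symb (A - B * K) B (Q + Kᵀ * R * K) R z) :=
  stmt3_general A B K Q R hQ hR hstab
end

section
/- Suppose A_c := A − BK is Schur-stable and P ∈ ℝ^{n×n} satisfies the Lyapunov equation A_cᵀ P A_c + Q_c = P. Then for every integer N ≥ 1 and all integers 0 ≤ k ≤ j ≤ N−1, the off-diagonal Hessian block plus its terminal correction collapses to an infinite sum that depends only on the difference j − k: ∑_{i=0}^{N−1−j} Bᵀ(A_cᵀ)^i Q_c A_c^{i+j−k} B + Bᵀ(A_cᵀ)^{N−j} P A_c^{N−k} B = ∑_{i=0}^∞ Bᵀ(A_cᵀ)^i Q_c A_c^{i+j−k} B. -/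
/-!
Since `Q_c = P - A_cᵀ P A_c`, the partial sums of `∑ (A_cᵀ)^i Q_c A_c^i` telescope to
`P - (A_cᵀ)^M P A_c^M`. Schur stability bounds the spectral radius of `A_c` away from `1`, so by
Gelfand's formula `‖A_c^i‖` decays geometrically and the series converges absolutely to `P`.
Both sides of the identity are `Bᵀ (·) A_c^(j-k) B` applied to this series: on the left its
partial sum up to `N - j` plus the remainder, on the right its full sum.
-/

open Matrix Filter
open scoped Kronecker

open scoped NNReal ENNReal Topology

section Telescoping

variable {α : Type*}

theorem sum_range_pow_mul_mul_pow_add [Ring α] {a b p q : α} (h : b * p * a + q = p) (M : ℕ) :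
    ∑ i ∈ Finset.range M, b ^ i * q * a ^ i + b ^ M * p * a ^ M = p := by
  have hstep : ∀ i, b ^ i * q * a ^ i = b ^ i * p * a ^ i - b ^ (i + 1) * p * a ^ (i + 1) := by
    intro i
    rw [← sub_eq_of_eq_add' h.symm, pow_succ, pow_succ']
    simp only [mul_sub, sub_mul, mul_assoc]
  simp only [hstep, Finset.sum_range_sub', pow_zero, one_mul, mul_one, sub_add_cancel]

theorem hasSum_pow_mul_mul_pow [NormedRing α] [CompleteSpace α] {a b p q : α}
    (h : b * p * a + q = p) (hab : Summable fun i => ‖b ^ i‖ * ‖a ^ i‖) :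
    HasSum (fun i => b ^ i * q * a ^ i) p := by
  have hnorm : ∀ x : α, ∀ i, ‖b ^ i * x * a ^ i‖ ≤ ‖x‖ * (‖b ^ i‖ * ‖a ^ i‖) := fun x i =>
    (norm_mul₃_le ..).trans_eq (by ring)
  have hsummable : Summable fun i => ‖b ^ i * q * a ^ i‖ :=
    (hab.mul_left ‖q‖).of_nonneg_of_le (fun _ => norm_nonneg _) (hnorm q)
  have htail : Tendsto (fun M => b ^ M * p * a ^ M) atTop (𝓝 0) :=
    squeeze_zero_norm (hnorm p) (by simpa using (hab.tendsto_atTop_zero).const_mul ‖p‖)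
  refine (hasSum_iff_tendsto_nat_of_summable_norm hsummable).mpr ?_
  simpa [← sub_eq_of_eq_add (sum_range_pow_mul_mul_pow_add h _).symm] using
    tendsto_const_nhds.sub htail

end Telescoping

section SpectralRadius

variable {𝔸 : Type*} [NormedRing 𝔸] [NormedAlgebra ℂ 𝔸] [CompleteSpace 𝔸]

theorem eventually_norm_pow_le_of_spectralRadius_lt (a : 𝔸) {r : ℝ≥0}
    (h : spectralRadius ℂ a < r) : ∀ᶠ i : ℕ in atTop, ‖a ^ i‖ ≤ r ^ i := by
  have hgelfand := spectrum.pow_nnnorm_pow_one_div_tendsto_nhds_spectralRadius a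
  filter_upwards [hgelfand.eventually_lt_const h, eventually_gt_atTop 0] with i hi hi0
  rw [one_div, ENNReal.rpow_inv_lt_iff (by exact_mod_cast hi0), ENNReal.rpow_natCast] at hi
  exact_mod_cast hi.le

end SpectralRadius

section Frobenius

attribute [local instance] Matrix.frobeniusNormedAddCommGroup Matrix.frobeniusNormedRing
  Matrix.frobeniusNormedAlgebra

theorem SchurStable.exists_norm_pow_le {n : ℕ} {A : Matrix (Fin n) (Fin n) ℝ}
    (hA : SchurStable A) : ∃ r : ℝ≥0, r < 1 ∧ ∀ᶠ i : ℕ in atTop, ‖A ^ i‖ ≤ r ^ i := by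
  cases isEmpty_or_nonempty (Fin n)
  · exact ⟨0, zero_lt_one, .of_forall fun i => by simp [Subsingleton.elim (A ^ i) 0]⟩
  have hρ : spectralRadius ℂ (A.map Complex.ofReal) < 1 :=
    spectrum.spectralRadius_lt_of_forall_lt _ fun z hz => by exact_mod_cast hA z hz
  obtain ⟨r, hρr, hr⟩ := ENNReal.lt_iff_exists_nnreal_btwn.mp hρ
  refine ⟨r, by exact_mod_cast hr, ?_⟩
  filter_upwards [eventually_norm_pow_le_of_spectralRadius_lt _ hρr] with i hi
  have hmap : A.map Complex.ofReal ^ i = (A ^ i).map Complex.ofReal :=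
    (map_pow Complex.ofRealHom.mapMatrix A i).symm
  rwa [hmap, Matrix.frobenius_norm_map_eq _ _ Complex.norm_real] at hi

theorem SchurStable.summable_norm_transpose_pow_mul_norm_pow {n : ℕ}
    {A : Matrix (Fin n) (Fin n) ℝ} (hA : SchurStable A) :
    Summable fun i => ‖Aᵀ ^ i‖ * ‖A ^ i‖ := by
  obtain ⟨r, hr, hpow⟩ := hA.exists_norm_pow_le
  have hr2 : (r : ℝ) * r < 1 :=
    mul_lt_one_of_nonneg_of_lt_one_left r.2 (by exact_mod_cast hr) (by exact_mod_cast hr.le)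
  refine (summable_geometric_of_lt_one (by positivity) hr2).of_norm_bounded_eventually_nat ?_
  filter_upwards [hpow] with i hi
  rw [← transpose_pow, frobenius_norm_transpose, Real.norm_eq_abs, abs_mul_self, mul_pow]
  exact mul_le_mul hi hi (norm_nonneg _) (by positivity)

theorem SchurStable.hasSum_lyapunov {n : ℕ} {A P Q : Matrix (Fin n) (Fin n) ℝ}
    (hA : SchurStable A) (h : Aᵀ * P * A + Q = P) :
    HasSum (fun i => Aᵀ ^ i * Q * A ^ i) P :=
  hasSum_pow_mul_mul_pow h hA.summable_norm_transpose_pow_mul_norm_pow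

end Frobenius

theorem stmt8_general {n m : ℕ}
    (A : Matrix (Fin n) (Fin n) ℝ) (B : Matrix (Fin n) (Fin m) ℝ)
    (K : Matrix (Fin m) (Fin n) ℝ)
    (Q : Matrix (Fin n) (Fin n) ℝ) (R : Matrix (Fin m) (Fin m) ℝ)
    (hstab : SchurStable (A - B * K))
    (P : Matrix (Fin n) (Fin n) ℝ)
    (hlyap : (A - B * K)ᵀ * P * (A - B * K) + (Q + Kᵀ * R * K) = P) :
    ∀ N : ℕ, 1 ≤ N → ∀ j k : ℕ, k ≤ j → j ≤ N - 1 →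
      (∑ i ∈ Finset.range (N - j),
          Bᵀ * ((A - B * K)ᵀ) ^ i * (Q + Kᵀ * R * K) * (A - B * K) ^ (i + j - k) * B)
        + Bᵀ * ((A - B * K)ᵀ) ^ (N - j) * P * (A - B * K) ^ (N - k) * B
      = ∑' i : ℕ,
          Bᵀ * ((A - B * K)ᵀ) ^ i * (Q + Kᵀ * R * K) * (A - B * K) ^ (i + j - k) * B := by
  intro N _ j k hkj hjN
  set Ac := A - B * K
  obtain ⟨d, rfl⟩ : ∃ d, j = k + d := ⟨j - k, by omega⟩
  have hshift : ∀ i, i + (k + d) - k = i + d := fun i => by omega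
  have hNk : N - k = N - (k + d) + d := by omega
  let S : Matrix (Fin n) (Fin n) ℝ →+ Matrix (Fin m) (Fin m) ℝ :=
    (addMonoidHomMulLeft Bᵀ).comp (addMonoidHomMulRight (Ac ^ d * B))
  have hS : ∀ i X, Bᵀ * Acᵀ ^ i * X * Ac ^ (i + d) * B = S (Acᵀ ^ i * X * Ac ^ i) := by
    intro i X
    simp [S, pow_add, Matrix.mul_assoc]
  have hS_cont : Continuous S :=
    continuous_const.matrix_mul (continuous_id.matrix_mul continuous_const)
  simp only [hshift, hNk, hS, ← map_sum, ← map_add, sum_range_pow_mul_mul_pow_add hlyap]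
  exact ((hstab.hasSum_lyapunov hlyap).map S hS_cont).tsum_eq.symm

/-- If `A - B*K` is Schur-stable and `P` solves the Lyapunov equation, then for all
`N ≥ 1` and `0 ≤ k ≤ j ≤ N-1` the off-diagonal Hessian block plus its terminal
correction collapses to an infinite sum depending only on `j - k`. -/
theorem stmt8 {n m : ℕ} (hn : 0 < n) (hm : 0 < m)
    (A : Matrix (Fin n) (Fin n) ℝ) (B : Matrix (Fin n) (Fin m) ℝ)
    (K : Matrix (Fin m) (Fin n) ℝ)
    (Q : Matrix (Fin n) (Fin n) ℝ) (R : Matrix (Fin m) (Fin m) ℝ)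
    (hQ : Q.PosSemidef) (hR : R.PosDef)
    (hstab : SchurStable (A - B * K))
    (P : Matrix (Fin n) (Fin n) ℝ)
    (hlyap : (A - B * K)ᵀ * P * (A - B * K) + (Q + Kᵀ * R * K) = P) :
    ∀ N : ℕ, 1 ≤ N → ∀ j k : ℕ, k ≤ j → j ≤ N - 1 →
      (∑ i ∈ Finset.range (N - j),
          Bᵀ * ((A - B * K)ᵀ) ^ i * (Q + Kᵀ * R * K) * (A - B * K) ^ (i + j - k) * B)
        + Bᵀ * ((A - B * K)ᵀ) ^ (N - j) * P * (A - B * K) ^ (N - k) * B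
      = ∑' i : ℕ,
          Bᵀ * ((A - B * K)ᵀ) ^ i * (Q + Kᵀ * R * K) * (A - B * K) ^ (i + j - k) * B :=
  stmt8_general A B K Q R hstab P hlyap
end

section
/- Suppose every eigenvalue μ ∈ ℂ of A satisfies |μ| < 1, take K = 0 (so A_c = A and Q_c = Q), and suppose the terminal weight P ∈ ℝ^{n×n} satisfies the discrete Lyapunov equation Aᵀ P A + Q = P. Then for every horizon N ≥ 1 the condensed Hessian H_N is block Toeplitz: for all 0 ≤ j, k ≤ N−1 with j ≥ k, (H_N)_{j,k} = ∑_{i=0}^∞ Bᵀ(Aᵀ)^i Q A^{i+j−k} B + (if j = k then R else 0), so the blocks depend only on j − k. -/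
open Matrix Filter
open scoped Kronecker

open scoped Topology

/-!
The Lyapunov equation makes the finite-horizon blocks telescope: with `X = Aᵀ`, `Y = A`,
`Xⁱ Q Yⁱ⁺ᵈ = Xⁱ P Yⁱ⁺ᵈ - Xⁱ⁺¹ P Yⁱ⁺¹⁺ᵈ`, so the truncated sum plus the terminal term
`X^K P Y^(K+d)` always equals `P Yᵈ`, independently of the horizon `K`. Schur stability gives,
through Gelfand's formula, geometric decay of `‖Aⁱ‖`, so the terminal term tends to `0` and the
infinite sum also equals `P Yᵈ`.
-/

theorem sum_range_pow_mul_mul_pow_add_of_lyapunov {R : Type*} [Ring R] {X Y P Q : R}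
    (hlyap : X * P * Y + Q = P) (d K : ℕ) :
    ∑ i ∈ Finset.range K, X ^ i * Q * Y ^ (i + d) + X ^ K * P * Y ^ (K + d) = P * Y ^ d := by
  induction K with
  | zero => simp
  | succ K ih =>
    have hstep : X ^ K * Q * Y ^ (K + d) + X ^ (K + 1) * P * Y ^ (K + 1 + d)
        = X ^ K * P * Y ^ (K + d) := by
      conv_rhs => rw [← hlyap]
      rw [pow_succ, add_right_comm K 1 d, pow_succ' Y]
      simp only [mul_add, add_mul, mul_assoc]
      abel
    rw [Finset.sum_range_succ, add_assoc, hstep, ih]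

theorem hasSum_pow_mul_mul_pow_of_lyapunov {R : Type*} [NormedRing R] [CompleteSpace R]
    {X Y P Q : R} (hX : Summable (‖X ^ ·‖)) (hY : Tendsto (Y ^ ·) atTop (𝓝 0))
    (hlyap : X * P * Y + Q = P) (d : ℕ) :
    HasSum (fun i ↦ X ^ i * Q * Y ^ (i + d)) (P * Y ^ d) := by
  have hYd : Tendsto (fun i ↦ Y ^ (i + d)) atTop (𝓝 0) := hY.comp (tendsto_add_atTop_nat d)
  have hsummable : Summable fun i ↦ ‖X ^ i * Q * Y ^ (i + d)‖ := by
    refine Summable.of_norm_bounded_eventually_nat (hX.mul_right ‖Q‖) ?_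
    filter_upwards [(tendsto_norm_zero.comp hYd).eventually_le_const zero_lt_one] with i hi
    calc ‖‖X ^ i * Q * Y ^ (i + d)‖‖ ≤ ‖X ^ i‖ * ‖Q‖ * ‖Y ^ (i + d)‖ := by
          rw [norm_norm]; exact (norm_mul_le _ _).trans (by gcongr; exact norm_mul_le _ _)
      _ ≤ ‖X ^ i‖ * ‖Q‖ := by
          simpa using mul_le_mul_of_nonneg_left hi (by positivity : 0 ≤ ‖X ^ i‖ * ‖Q‖)
  have hX0 : Tendsto (X ^ ·) atTop (𝓝 0) :=
    tendsto_zero_iff_norm_tendsto_zero.2 hX.tendsto_atTop_zero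
  have htail : Tendsto (fun K ↦ X ^ K * P * Y ^ (K + d)) atTop (𝓝 0) := by
    simpa using (hX0.mul_const P).mul hYd
  rw [hasSum_iff_tendsto_nat_of_summable_norm hsummable]
  have hlim := (tendsto_const_nhds (x := P * Y ^ d)).sub htail
  rw [sub_zero] at hlim
  refine hlim.congr fun K ↦ ?_
  exact (eq_sub_of_add_eq (sum_range_pow_mul_mul_pow_add_of_lyapunov hlyap d K)).symm

theorem summable_norm_pow_of_forall_norm_lt_one {𝔸 : Type*} [NormedRing 𝔸] [NormedAlgebra ℂ 𝔸]
    [CompleteSpace 𝔸] {a : 𝔸} (ha : ∀ z ∈ spectrum ℂ a, ‖z‖ < 1) : Summable (‖a ^ ·‖) := by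
  have hρ : spectralRadius ℂ a < 1 := by
    rcases (spectrum ℂ a).eq_empty_or_nonempty with hempty | hne
    · simp [spectralRadius, hempty]
    · exact_mod_cast spectrum.spectralRadius_lt_of_forall_lt_of_nonempty hne
        fun z hz ↦ by exact_mod_cast ha z hz
  obtain ⟨r, hρr, hr1⟩ := ENNReal.lt_iff_exists_nnreal_btwn.mp hρ
  refine Summable.of_norm_bounded_eventually_nat
    (summable_geometric_of_lt_one r.coe_nonneg (by exact_mod_cast hr1)) ?_
  have hgelfand := spectrum.pow_nnnorm_pow_one_div_tendsto_nhds_spectralRadius a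
  filter_upwards [hgelfand.eventually_lt_const hρr, eventually_ge_atTop 1] with i hi hi1
  rw [one_div, ENNReal.rpow_inv_lt_iff (by exact_mod_cast hi1), ENNReal.rpow_natCast] at hi
  rw [norm_norm]
  exact_mod_cast hi.le

section Frobenius

attribute [local instance] Matrix.frobeniusNormedAddCommGroup Matrix.frobeniusNormedRing
  Matrix.frobeniusNormedAlgebra

variable {n m : ℕ} {A : Matrix (Fin n) (Fin n) ℝ}

theorem SchurStable.summable_norm_pow (hA : SchurStable A) : Summable (‖A ^ ·‖) := by
  refine (summable_norm_pow_of_forall_norm_lt_one hA).congr fun i ↦ ?_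
  rw [← frobenius_norm_map_eq (A ^ i) _ Complex.norm_real]
  exact congrArg norm (Matrix.map_pow A Complex.ofRealHom i).symm

theorem SchurStable.hasSum_of_lyapunov (hA : SchurStable A) (B : Matrix (Fin n) (Fin m) ℝ)
    {P Q : Matrix (Fin n) (Fin n) ℝ} (hlyap : Aᵀ * P * A + Q = P) (d : ℕ) :
    HasSum (fun i ↦ Bᵀ * (Aᵀ) ^ i * Q * A ^ (i + d) * B) (Bᵀ * P * A ^ d * B) := by
  have hAT : Summable (‖(Aᵀ) ^ ·‖) := by
    simpa only [← transpose_pow, frobenius_norm_transpose] using hA.summable_norm_pow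
  have hA0 : Tendsto (A ^ ·) atTop (𝓝 0) :=
    tendsto_zero_iff_norm_tendsto_zero.2 hA.summable_norm_pow.tendsto_atTop_zero
  have hsum := ((hasSum_pow_mul_mul_pow_of_lyapunov hAT hA0 hlyap d).map
    (addMonoidHomMulLeft Bᵀ) (continuous_const.matrix_mul continuous_id)).map
    (addMonoidHomMulRight B) (continuous_id.matrix_mul continuous_const)
  simpa only [Function.comp_def, addMonoidHomMulLeft_apply, addMonoidHomMulRight_apply,
    Matrix.mul_assoc] using hsum

end Frobenius

theorem Hge_eq_tsum_of_lyapunov {n m : ℕ} {A : Matrix (Fin n) (Fin n) ℝ}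
    (hA : SchurStable A) (B : Matrix (Fin n) (Fin m) ℝ) {P Q : Matrix (Fin n) (Fin n) ℝ}
    (R : Matrix (Fin m) (Fin m) ℝ) (hlyap : Aᵀ * P * A + Q = P) {N j k : ℕ}
    (hkj : k ≤ j) (hjN : j ≤ N) :
    Hge A B Q P R N j k
      = (∑' i : ℕ, Bᵀ * (Aᵀ) ^ i * Q * A ^ (i + j - k) * B) + if j = k then R else 0 := by
  have hexp : ∀ i, i + j - k = i + (j - k) := fun i ↦ by omega
  have hN : N - k = (N - j) + (j - k) := by omega
  have htel : ∑ i ∈ Finset.range (N - j), Bᵀ * (Aᵀ) ^ i * Q * A ^ (i + (j - k)) * B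
      + Bᵀ * (Aᵀ) ^ (N - j) * P * A ^ (N - j + (j - k)) * B = Bᵀ * P * A ^ (j - k) * B := by
    simpa only [Matrix.mul_add, Matrix.add_mul, Matrix.mul_sum, Matrix.sum_mul, Matrix.mul_assoc]
      using congrArg (Bᵀ * · * B) (sum_range_pow_mul_mul_pow_add_of_lyapunov hlyap (j - k) (N - j))
  simp only [Hge, hexp, hN, htel, (hA.hasSum_of_lyapunov B hlyap (j - k)).tsum_eq]

theorem stmt10_general {n m : ℕ}
    (A : Matrix (Fin n) (Fin n) ℝ) (B : Matrix (Fin n) (Fin m) ℝ)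
    (Q : Matrix (Fin n) (Fin n) ℝ) (R : Matrix (Fin m) (Fin m) ℝ)
    (hstab : SchurStable A)
    (P : Matrix (Fin n) (Fin n) ℝ)
    (hlyap : Aᵀ * P * A + Q = P) :
    ∀ N : ℕ, 1 ≤ N → ∀ j k : Fin N, (k : ℕ) ≤ (j : ℕ) →
      (Matrix.of fun a b : Fin m => Hmat A B Q P R N (j, a) (k, b))
        = (∑' i : ℕ, Bᵀ * (Aᵀ) ^ i * Q * A ^ (i + (j : ℕ) - (k : ℕ)) * B)
          + (if (j : ℕ) = (k : ℕ) then R else 0) := by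
  intro N _ j k hkj
  have hblock : (Matrix.of fun a b : Fin m => Hmat A B Q P R N (j, a) (k, b))
      = Hge A B Q P R N j k := by
    ext a b
    simp only [Hmat, Matrix.of_apply, if_pos hkj]
  rw [hblock, Hge_eq_tsum_of_lyapunov hstab B R hlyap hkj j.is_lt.le]

/-- If `A` is Schur-stable, `K = 0`, and the terminal weight `P` solves the discrete
Lyapunov equation `Aᵀ P A + Q = P`, then the condensed Hessian is block Toeplitz:
each `(j,k)` block with `j ≥ k` equals `∑ᵢ Bᵀ(Aᵀ)ⁱ Q A^{i+j-k} B + (if j = k then R else 0)`. -/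
theorem stmt10 {n m : ℕ} (hn : 0 < n) (hm : 0 < m)
    (A : Matrix (Fin n) (Fin n) ℝ) (B : Matrix (Fin n) (Fin m) ℝ)
    (Q : Matrix (Fin n) (Fin n) ℝ) (R : Matrix (Fin m) (Fin m) ℝ)
    (hQ : Q.PosSemidef) (hR : R.PosDef)
    (hstab : SchurStable A)
    (P : Matrix (Fin n) (Fin n) ℝ) (hP : P.IsSymm)
    (hlyap : Aᵀ * P * A + Q = P) :
    ∀ N : ℕ, 1 ≤ N → ∀ j k : Fin N, (k : ℕ) ≤ (j : ℕ) →
      (Matrix.of fun a b : Fin m => Hmat A B Q P R N (j, a) (k, b))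
        = (∑' i : ℕ, Bᵀ * (Aᵀ) ^ i * Q * A ^ (i + (j : ℕ) - (k : ℕ)) * B)
          + (if (j : ℕ) = (k : ℕ) then R else 0) :=
  stmt10_general A B Q R hstab P hlyap
end

section
/- Suppose A_c := A − BK is Schur-stable and the terminal weight P ∈ ℝ^{n×n} satisfies the Lyapunov equation A_cᵀ P A_c + Q_c = P. Then the largest eigenvalue λ_max(H_N) of the symmetric matrix H_N is nondecreasing in the horizon N, and the smallest eigenvalue λ_min(H_N) is nonincreasing in N. -/
open Matrix Filter
open scoped Kronecker

/-!
Under the Lyapunov equation `A_cᵀ P A_c + Q_c = P` the terminal weight absorbs one more stage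
cost exactly, so lengthening the horizon leaves the existing blocks of the condensed Hessian
unchanged: `H_{N₁}` is the leading principal submatrix of `H_{N₂}`. The extreme eigenvalues of a
principal submatrix of a symmetric matrix lie between those of the whole matrix, because
`λ_max • 1 - H` and `H - λ_min • 1` are positive semidefinite, and compressing them to a
coordinate subspace keeps them so.
-/

section SpectrumSubmatrix

variable {o l : Type*} [Fintype o] [DecidableEq o] [Fintype l] [DecidableEq l]

lemma Matrix.submatrix_algebraMap {R : Type*} [CommSemiring R] {ι : l → o}
    (hι : Function.Injective ι) (c : R) :
    (algebraMap R (Matrix o o R) c).submatrix ι ι = algebraMap R _ c := by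
  simp [algebraMap_eq_diagonal, submatrix_diagonal _ _ hι]

namespace Matrix.IsHermitian

lemma posSemidef_algebraMap_sub_iff {T : Matrix o o ℝ} (hT : T.IsHermitian) (c : ℝ) :
    (algebraMap ℝ _ c - T).PosSemidef ↔ ∀ μ ∈ spectrum ℝ T, μ ≤ c := by
  have hH : (algebraMap ℝ (Matrix o o ℝ) c - T).IsHermitian :=
    (isHermitian_diagonal_of_self_adjoint _ (by simp [IsSelfAdjoint])).sub hT
  rw [posSemidef_iff_isHermitian_and_spectrum_nonneg, and_iff_right hH,
    ← spectrum.singleton_sub_eq]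
  simp [Set.subset_def]

lemma posSemidef_sub_algebraMap_iff {T : Matrix o o ℝ} (hT : T.IsHermitian) (c : ℝ) :
    (T - algebraMap ℝ _ c).PosSemidef ↔ ∀ μ ∈ spectrum ℝ T, c ≤ μ := by
  have hH : (T - algebraMap ℝ (Matrix o o ℝ) c).IsHermitian :=
    hT.sub (isHermitian_diagonal_of_self_adjoint _ (by simp [IsSelfAdjoint]))
  rw [posSemidef_iff_isHermitian_and_spectrum_nonneg, and_iff_right hH,
    ← spectrum.sub_singleton_eq]
  simp [Set.subset_def]

variable [Nonempty l] {T : Matrix o o ℝ} {ι : l → o}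

lemma sSup_spectrum_submatrix_le (hT : T.IsHermitian) (hι : Function.Injective ι) :
    sSup (spectrum ℝ (T.submatrix ι ι)) ≤ sSup (spectrum ℝ T) := by
  have hS : (T.submatrix ι ι).IsHermitian := hT.submatrix ι
  have hTc : (algebraMap ℝ _ (sSup (spectrum ℝ T)) - T).PosSemidef :=
    (hT.posSemidef_algebraMap_sub_iff _).mpr fun μ hμ =>
      le_csSup T.finite_real_spectrum.bddAbove hμ
  have hSc := hTc.submatrix ι
  rw [submatrix_sub, Pi.sub_apply, Pi.sub_apply, submatrix_algebraMap hι,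
    hS.posSemidef_algebraMap_sub_iff] at hSc
  exact csSup_le ⟨_, hS.eigenvalues_mem_spectrum_real (Classical.arbitrary l)⟩ hSc

lemma sInf_spectrum_le_submatrix (hT : T.IsHermitian) (hι : Function.Injective ι) :
    sInf (spectrum ℝ T) ≤ sInf (spectrum ℝ (T.submatrix ι ι)) := by
  have hS : (T.submatrix ι ι).IsHermitian := hT.submatrix ι
  have hTc : (T - algebraMap ℝ _ (sInf (spectrum ℝ T))).PosSemidef :=
    (hT.posSemidef_sub_algebraMap_iff _).mpr fun μ hμ =>
      csInf_le T.finite_real_spectrum.bddBelow hμ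
  have hSc := hTc.submatrix ι
  rw [submatrix_sub, Pi.sub_apply, Pi.sub_apply, submatrix_algebraMap hι,
    hS.posSemidef_sub_algebraMap_iff] at hSc
  exact le_csInf ⟨_, hS.eigenvalues_mem_spectrum_real (Classical.arbitrary l)⟩ hSc

end Matrix.IsHermitian

end SpectrumSubmatrix

section CondensedHessian

variable {n m : ℕ} (Ac : Matrix (Fin n) (Fin n) ℝ) (B : Matrix (Fin n) (Fin m) ℝ)
  (Qc P : Matrix (Fin n) (Fin n) ℝ) (R : Matrix (Fin m) (Fin m) ℝ)

lemma lyapunov_telescope (hlyap : Acᵀ * P * Ac + Qc = P) (a b : ℕ) :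
    Bᵀ * (Acᵀ) ^ a * Qc * Ac ^ b * B + Bᵀ * (Acᵀ) ^ (a + 1) * P * Ac ^ (b + 1) * B
      = Bᵀ * (Acᵀ) ^ a * P * Ac ^ b * B := by
  conv_rhs => rw [← hlyap]
  rw [pow_succ, pow_succ']
  simp only [Matrix.mul_add, Matrix.add_mul, Matrix.mul_assoc]
  exact add_comm _ _

lemma Hge_succ (hlyap : Acᵀ * P * Ac + Qc = P) {N j k : ℕ} (hk : k ≤ j) (hj : j ≤ N) :
    Hge Ac B Qc P R (N + 1) j k = Hge Ac B Qc P R N j k := by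
  have hNj : N + 1 - j = N - j + 1 := by omega
  have hNk : N + 1 - k = N - k + 1 := by omega
  have hjk : N - j + j - k = N - k := by omega
  rw [Hge, Hge, hNj, hNk, Finset.sum_range_succ, hjk, add_assoc (Finset.sum _ _),
    lyapunov_telescope Ac B Qc P hlyap]

lemma Hge_eq_of_le (hlyap : Acᵀ * P * Ac + Qc = P) {N₁ N₂ j k : ℕ} (hk : k ≤ j)
    (hj : j ≤ N₁) (h : N₁ ≤ N₂) : Hge Ac B Qc P R N₂ j k = Hge Ac B Qc P R N₁ j k := by
  induction N₂, h using Nat.le_induction with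
  | base => rfl
  | succ N hN ih => rw [Hge_succ Ac B Qc P R hlyap hk (hj.trans hN), ih]

lemma Hmat_eq_submatrix (hlyap : Acᵀ * P * Ac + Qc = P) {N₁ N₂ : ℕ} (h : N₁ ≤ N₂) :
    Hmat Ac B Qc P R N₁
      = (Hmat Ac B Qc P R N₂).submatrix
          (Prod.map (Fin.castLE h) id) (Prod.map (Fin.castLE h) id) := by
  ext p q
  simp only [Hmat, submatrix_apply, of_apply, Prod.map_fst, Prod.map_snd, id, Fin.val_castLE]
  split_ifs with hqp
  · rw [Hge_eq_of_le Ac B Qc P R hlyap hqp p.1.isLt.le h]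
  · rw [Hge_eq_of_le Ac B Qc P R hlyap (le_of_not_ge hqp) q.1.isLt.le h]

lemma Hmat_isSymm (hQc : Qc.IsSymm) (hP : P.IsSymm) (hR : R.IsSymm) (N : ℕ) :
    (Hmat Ac B Qc P R N).IsSymm := by
  have hdiag : ∀ j, (Hge Ac B Qc P R N j j).IsSymm := fun j => by
    simp only [IsSymm, Hge, Nat.add_sub_cancel, if_true, transpose_add, transpose_sum,
      transpose_mul, transpose_transpose, transpose_pow, hQc.eq, hP.eq, hR.eq, Matrix.mul_assoc]
  refine IsSymm.ext fun ⟨p, i⟩ ⟨q, j⟩ => ?_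
  simp only [Hmat, of_apply, transpose_apply]
  rcases lt_trichotomy (p : ℕ) q with hpq | hpq | hpq
  · rw [if_pos hpq.le, if_neg (by omega)]
  · obtain rfl : p = q := Fin.ext hpq
    rw [if_pos le_rfl, if_pos le_rfl]
    exact (hdiag p).apply i j
  · rw [if_neg (by omega), if_pos hpq.le]

end CondensedHessian

theorem stmt12_general {n m : ℕ} (hm : 0 < m)
    (A : Matrix (Fin n) (Fin n) ℝ) (B : Matrix (Fin n) (Fin m) ℝ)
    (K : Matrix (Fin m) (Fin n) ℝ)
    (Q : Matrix (Fin n) (Fin n) ℝ) (R : Matrix (Fin m) (Fin m) ℝ)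
    (hQ : Q.PosSemidef) (hR : R.PosDef)
    (P : Matrix (Fin n) (Fin n) ℝ) (hP : P.IsSymm)
    (hlyap : (A - B * K)ᵀ * P * (A - B * K) + (Q + Kᵀ * R * K) = P) :
    ∀ N₁ N₂ : ℕ, 1 ≤ N₁ → N₁ ≤ N₂ →
      sSup (spectrum ℝ (Hmat (A - B * K) B (Q + Kᵀ * R * K) P R N₁))
        ≤ sSup (spectrum ℝ (Hmat (A - B * K) B (Q + Kᵀ * R * K) P R N₂)) ∧
      sInf (spectrum ℝ (Hmat (A - B * K) B (Q + Kᵀ * R * K) P R N₂))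
        ≤ sInf (spectrum ℝ (Hmat (A - B * K) B (Q + Kᵀ * R * K) P R N₁)) := by
  intro N₁ N₂ hN₁ h
  have hRsymm : R.IsSymm := isHermitian_iff_isSymm.mp hR.isHermitian
  have hQc : (Q + Kᵀ * R * K).IsSymm := (isHermitian_iff_isSymm.mp hQ.isHermitian).add <| by
    simp only [IsSymm, transpose_mul, transpose_transpose, hRsymm.eq, Matrix.mul_assoc]
  have hH : (Hmat (A - B * K) B (Q + Kᵀ * R * K) P R N₂).IsHermitian :=
    isHermitian_iff_isSymm.mpr (Hmat_isSymm _ B _ P R hQc hP hRsymm N₂)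
  have : Nonempty (Fin N₁ × Fin m) := ⟨(⟨0, hN₁⟩, ⟨0, hm⟩)⟩
  have hι : Function.Injective (Prod.map (Fin.castLE h) (id : Fin m → Fin m)) :=
    (Fin.castLE_injective h).prodMap Function.injective_id
  rw [Hmat_eq_submatrix _ B _ P R hlyap h]
  exact ⟨hH.sSup_spectrum_submatrix_le hι, hH.sInf_spectrum_le_submatrix hι⟩

/-- If `A - B*K` is Schur-stable and the terminal weight solves the Lyapunov equation,
then the largest eigenvalue of `H_N` is nondecreasing in the horizon `N`, and the
smallest eigenvalue is nonincreasing in `N`. -/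
theorem stmt12 {n m : ℕ} (hn : 0 < n) (hm : 0 < m)
    (A : Matrix (Fin n) (Fin n) ℝ) (B : Matrix (Fin n) (Fin m) ℝ)
    (K : Matrix (Fin m) (Fin n) ℝ)
    (Q : Matrix (Fin n) (Fin n) ℝ) (R : Matrix (Fin m) (Fin m) ℝ)
    (hQ : Q.PosSemidef) (hR : R.PosDef)
    (hstab : SchurStable (A - B * K))
    (P : Matrix (Fin n) (Fin n) ℝ) (hP : P.IsSymm)
    (hlyap : (A - B * K)ᵀ * P * (A - B * K) + (Q + Kᵀ * R * K) = P) :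
    ∀ N₁ N₂ : ℕ, 1 ≤ N₁ → N₁ ≤ N₂ →
      sSup (spectrum ℝ (Hmat (A - B * K) B (Q + Kᵀ * R * K) P R N₁))
        ≤ sSup (spectrum ℝ (Hmat (A - B * K) B (Q + Kᵀ * R * K) P R N₂)) ∧
      sInf (spectrum ℝ (Hmat (A - B * K) B (Q + Kᵀ * R * K) P R N₂))
        ≤ sInf (spectrum ℝ (Hmat (A - B * K) B (Q + Kᵀ * R * K) P R N₁)) :=
  stmt12_general hm A B K Q R hQ hR P hP hlyap
end

section
/- Suppose A_c := A − BK is Schur-stable, the terminal weight P ∈ ℝ^{n×n} is symmetric positive semidefinite, and P satisfies the Lyapunov equation A_cᵀ P A_c + Q_c = P. Then: (i) every diagonal block of the condensed Hessian equals M := BᵀPB + R, i.e. (H_N)_{j,j} = BᵀPB + R for every horizon N ≥ 1 and every 0 ≤ j ≤ N−1; (ii) M is symmetric positive definite, and hence there exists a lower-triangular matrix L ∈ ℝ^{m×m} with positive diagonal entries such that L Lᵀ = M. -/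
/-!
Iterating the Lyapunov equation `A_cᵀ P A_c + Q_c = P` gives
`P = ∑_{i<L} (A_cᵀ)ⁱ Q_c A_cⁱ + (A_cᵀ)ᴸ P A_cᴸ` for every `L`; sandwiched between `Bᵀ` and `B`
with `L = N - j`, the right-hand side is the `j`-th diagonal block of `H_N` without its `R` term.
So every diagonal block is `M = BᵀPB + R`, a positive semidefinite plus a positive definite
matrix. A Cholesky factor of `M` comes from its `LDLᵀ` decomposition: `L √D` is lower triangular
with `(L √D)(L √D)ᵀ = M`, its diagonal is nonzero because `det M ≠ 0`, and flipping the signs of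
the columns with a negative diagonal entry keeps the product and makes the diagonal positive.
-/

open Matrix Filter
open scoped Kronecker

namespace Matrix

variable {ι : Type*} [Fintype ι] [LinearOrder ι]

theorem IsLowerTriangular.diag_ne_zero_of_det_ne_zero {R : Type*} [CommRing R]
    {L : Matrix ι ι R} (hL : L.IsLowerTriangular) (hdet : L.det ≠ 0) (i : ι) : L i i ≠ 0 :=
  fun h => hdet <| (det_of_isLowerTriangular L hL).trans (Finset.prod_eq_zero (Finset.mem_univ i) h)

theorem IsLowerTriangular.exists_diag_pos_mul_transpose_eq {L : Matrix ι ι ℝ}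
    (hL : L.IsLowerTriangular) (hdiag : ∀ i, L i i ≠ 0) :
    ∃ L' : Matrix ι ι ℝ, L'.IsLowerTriangular ∧ (∀ i, 0 < L' i i) ∧ L' * L'ᵀ = L * Lᵀ := by
  set ε : ι → ℝ := fun i => if 0 < L i i then 1 else -1
  have hε : diagonal ε * diagonal ε = 1 := by
    rw [diagonal_mul_diagonal, ← diagonal_one]
    congr 1
    funext i
    by_cases h : 0 < L i i <;> simp [ε, h]
  refine ⟨L * diagonal ε, hL.mul (blockTriangular_diagonal ε), fun i => ?_, ?_⟩
  · rw [mul_diagonal]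
    by_cases h : 0 < L i i
    · simp [ε, h]
    · simpa [ε, h] using lt_of_le_of_ne (not_lt.mp h) (hdiag i)
  · rw [transpose_mul, diagonal_transpose, Matrix.mul_assoc, ← Matrix.mul_assoc (diagonal ε),
      hε, Matrix.one_mul]

variable [LocallyFiniteOrderBot ι]

theorem PosDef.exists_isLowerTriangular_mul_transpose_eq {M : Matrix ι ι ℝ} (hM : M.PosDef) :
    ∃ L : Matrix ι ι ℝ, L.IsLowerTriangular ∧ L * Lᵀ = M := by
  have : WellFoundedLT ι := Finite.to_wellFoundedLT
  have hD : (LDL.diag hM).PosDef := by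
    rw [LDL.diag_eq_lowerInv_conj]
    exact hM.mul_mul_conjTranspose_same (vecMul_injective_of_invertible _)
  have hd : ∀ i, 0 < LDL.diagEntries hM i := posDef_diagonal_iff.mp hD
  have hlower : (LDL.lower hM).IsLowerTriangular := by
    have := LDL.invertibleLowerInv hM
    exact blockTriangular_inv_of_blockTriangular fun i j hij => LDL.lowerInv_triangular hM hij
  set s : ι → ℝ := fun i => √(LDL.diagEntries hM i)
  have hss : diagonal s * diagonal s = LDL.diag hM := by
    rw [diagonal_mul_diagonal, LDL.diag]
    congr 1
    funext i
    exact Real.mul_self_sqrt (hd i).le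
  refine ⟨LDL.lower hM * diagonal s, hlower.mul (blockTriangular_diagonal s), ?_⟩
  calc LDL.lower hM * diagonal s * (LDL.lower hM * diagonal s)ᵀ
      = LDL.lower hM * (diagonal s * diagonal s) * (LDL.lower hM)ᴴ := by
        rw [transpose_mul, diagonal_transpose, conjTranspose_eq_transpose_of_trivial]
        simp only [Matrix.mul_assoc]
    _ = M := by rw [hss, LDL.lower_conj_diag]

theorem PosDef.exists_cholesky {M : Matrix ι ι ℝ} (hM : M.PosDef) :
    ∃ L : Matrix ι ι ℝ, L.IsLowerTriangular ∧ (∀ i, 0 < L i i) ∧ L * Lᵀ = M := by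
  obtain ⟨L, hL, hLM⟩ := hM.exists_isLowerTriangular_mul_transpose_eq
  have hdet : L.det ≠ 0 := by
    have hMdet := hM.det_pos.ne'
    rw [← hLM, det_mul] at hMdet
    exact left_ne_zero_of_mul hMdet
  simpa only [hLM] using hL.exists_diag_pos_mul_transpose_eq (hL.diag_ne_zero_of_det_ne_zero hdet)

end Matrix

theorem sum_range_pow_mul_mul_pow_add_eq {R : Type*} [Ring R] {a b p q : R}
    (h : b * p * a + q = p) (N : ℕ) :
    (∑ i ∈ Finset.range N, b ^ i * q * a ^ i) + b ^ N * p * a ^ N = p := by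
  induction N with
  | zero => simp
  | succ N ih =>
    calc (∑ i ∈ Finset.range (N + 1), b ^ i * q * a ^ i) + b ^ (N + 1) * p * a ^ (N + 1)
        = (∑ i ∈ Finset.range N, b ^ i * q * a ^ i) + b ^ N * (b * p * a + q) * a ^ N := by
          rw [Finset.sum_range_succ, pow_succ, pow_succ']
          noncomm_ring
      _ = p := by rw [h, ih]

section CondensedHessian

variable {n m : ℕ} {Ac : Matrix (Fin n) (Fin n) ℝ} {B : Matrix (Fin n) (Fin m) ℝ}
  {Qc P : Matrix (Fin n) (Fin n) ℝ} {R : Matrix (Fin m) (Fin m) ℝ}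

theorem Hge_diag_eq (hlyap : Acᵀ * P * Ac + Qc = P) (N j : ℕ) :
    Hge Ac B Qc P R N j j = Bᵀ * P * B + R := by
  have hsum := sum_range_pow_mul_mul_pow_add_eq hlyap (N - j)
  simp only [Hge, Nat.add_sub_cancel]
  congr 1
  calc (∑ i ∈ Finset.range (N - j), Bᵀ * Acᵀ ^ i * Qc * Ac ^ i * B)
        + Bᵀ * Acᵀ ^ (N - j) * P * Ac ^ (N - j) * B
      = Bᵀ * ((∑ i ∈ Finset.range (N - j), Acᵀ ^ i * Qc * Ac ^ i)
          + Acᵀ ^ (N - j) * P * Ac ^ (N - j)) * B := by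
        simp only [Matrix.mul_add, Matrix.add_mul, Matrix.sum_mul, Matrix.mul_sum,
          Matrix.mul_assoc]
    _ = Bᵀ * P * B := by rw [hsum]

theorem Hmat_diag_block_eq (hlyap : Acᵀ * P * Ac + Qc = P) (N : ℕ) (j : Fin N) :
    (Matrix.of fun a b : Fin m => Hmat Ac B Qc P R N (j, a) (j, b)) = Bᵀ * P * B + R := by
  ext a b
  simp only [Matrix.of_apply, Hmat, le_refl, if_pos, Hge_diag_eq hlyap]

end CondensedHessian

theorem stmt16_general {n m : ℕ}
    (A : Matrix (Fin n) (Fin n) ℝ) (B : Matrix (Fin n) (Fin m) ℝ)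
    (K : Matrix (Fin m) (Fin n) ℝ)
    (Q : Matrix (Fin n) (Fin n) ℝ) (R : Matrix (Fin m) (Fin m) ℝ)
    (hR : R.PosDef)
    (P : Matrix (Fin n) (Fin n) ℝ) (hP : P.PosSemidef)
    (hlyap : (A - B * K)ᵀ * P * (A - B * K) + (Q + Kᵀ * R * K) = P) :
    (∀ N : ℕ, 1 ≤ N → ∀ j : Fin N,
      (Matrix.of fun a b : Fin m =>
          Hmat (A - B * K) B (Q + Kᵀ * R * K) P R N (j, a) (j, b))
        = Bᵀ * P * B + R) ∧
    (Bᵀ * P * B + R).PosDef ∧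
    ∃ L : Matrix (Fin m) (Fin m) ℝ,
      (∀ i j : Fin m, i < j → L i j = 0) ∧
      (∀ i : Fin m, 0 < L i i) ∧
      L * Lᵀ = Bᵀ * P * B + R := by
  have hBPB : (Bᵀ * P * B).PosSemidef := by
    simpa only [conjTranspose_eq_transpose_of_trivial] using hP.conjTranspose_mul_mul_same B
  have hM : (Bᵀ * P * B + R).PosDef := hR.posSemidef_add hBPB
  obtain ⟨L, hL, hLdiag, hLM⟩ := hM.exists_cholesky
  exact ⟨fun N _ j => Hmat_diag_block_eq hlyap N j, hM, L, fun i j hij => hL hij, hLdiag, hLM⟩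

/-- If `A - B*K` is Schur-stable and the symmetric positive semidefinite terminal
weight `P` solves the Lyapunov equation, then (i) every diagonal block of the condensed
Hessian equals `M = BᵀPB + R`, and (ii) `M` is symmetric positive definite, hence it
has a Cholesky factorization `M = L Lᵀ` with `L` lower triangular with positive
diagonal. -/
theorem stmt16 {n m : ℕ} (hn : 0 < n) (hm : 0 < m)
    (A : Matrix (Fin n) (Fin n) ℝ) (B : Matrix (Fin n) (Fin m) ℝ)
    (K : Matrix (Fin m) (Fin n) ℝ)
    (Q : Matrix (Fin n) (Fin n) ℝ) (R : Matrix (Fin m) (Fin m) ℝ)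
    (hQ : Q.PosSemidef) (hR : R.PosDef)
    (hstab : SchurStable (A - B * K))
    (P : Matrix (Fin n) (Fin n) ℝ) (hP : P.PosSemidef)
    (hlyap : (A - B * K)ᵀ * P * (A - B * K) + (Q + Kᵀ * R * K) = P) :
    (∀ N : ℕ, 1 ≤ N → ∀ j : Fin N,
      (Matrix.of fun a b : Fin m =>
          Hmat (A - B * K) B (Q + Kᵀ * R * K) P R N (j, a) (j, b))
        = Bᵀ * P * B + R) ∧
    (Bᵀ * P * B + R).PosDef ∧
    ∃ L : Matrix (Fin m) (Fin m) ℝ,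
      (∀ i j : Fin m, i < j → L i j = 0) ∧
      (∀ i : Fin m, 0 < L i i) ∧
      L * Lᵀ = Bᵀ * P * B + R :=
  stmt16_general A B K Q R hR P hP hlyap
end
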